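/- arXiv:0812.1528 — 13 statements merged into one kernel-verified Lean document; each statement's English description precedes it below -/
import Mathlib

section
/- If S is an r-dependent set in a graph Γ with minimum degree δ, where 0 ≤ r ≤ ⌊(δ-1)/2⌋, then the complement V \ S is a global offensive (δ-2r)-alliance in Γ. -/
open Finset

variable {V V₁ V₂ : Type*}

/-- Number of neighbors of `v` lying in `S`. -/
def degOn [Fintype V] [DecidableEq V] (G : SimpleGraph V) [DecidableRel G.Adj]
    (S : Finset V) (v : V) : ℕ :=
  (G.neighborFinset v ∩ S).card

/-- `S` is a dominating set of `G`. -/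
def IsDominating [Fintype V] (G : SimpleGraph V) (S : Finset V) : Prop :=
  ∀ v ∉ S, ∃ u ∈ S, G.Adj u v

/-- `S` is a global offensive `k`-alliance in `G`. -/
def IsGOA [Fintype V] [DecidableEq V] (G : SimpleGraph V) [DecidableRel G.Adj]
    (k : ℤ) (S : Finset V) : Prop :=
  IsDominating G S ∧ ∀ v ∉ S, (degOn G Sᶜ v : ℤ) + k ≤ (degOn G S v : ℤ)

/-- `S` is an offensive `k`-alliance in `G`: it is nonempty and every boundary
vertex has at least `k` more neighbors inside `S` than outside. -/
def IsOA [Fintype V] [DecidableEq V] (G : SimpleGraph V) [DecidableRel G.Adj]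
    (k : ℤ) (S : Finset V) : Prop :=
  S.Nonempty ∧ ∀ v ∉ S, (∃ u ∈ S, G.Adj u v) →
    (degOn G Sᶜ v : ℤ) + k ≤ (degOn G S v : ℤ)

/-- `S` is an `r`-dependent set in `G`. -/
def IsDependent [Fintype V] [DecidableEq V] (G : SimpleGraph V) [DecidableRel G.Adj]
    (r : ℕ) (S : Finset V) : Prop :=
  ∀ v ∈ S, degOn G S v ≤ r

/-- `S` is a `τ`-dominating set in `G`. -/
def IsTauDominating [Fintype V] [DecidableEq V] (G : SimpleGraph V) [DecidableRel G.Adj]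
    (τ : ℝ) (S : Finset V) : Prop :=
  ∀ v ∉ S, τ * (G.degree v : ℝ) ≤ (degOn G S v : ℝ)

/-- The global offensive `k`-alliance number of `G`. -/
noncomputable def goaNum [Fintype V] [DecidableEq V] (G : SimpleGraph V)
    [DecidableRel G.Adj] (k : ℤ) : ℕ :=
  sInf {t | ∃ S : Finset V, IsGOA G k S ∧ S.card = t}

/-- The maximum cardinality of an `r`-dependent set in `G`. -/
noncomputable def depNum [Fintype V] [DecidableEq V] (G : SimpleGraph V)
    [DecidableRel G.Adj] (r : ℕ) : ℕ :=
  sSup {t | ∃ S : Finset V, IsDependent G r S ∧ S.card = t}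

theorem stmt_0 [Fintype V] [DecidableEq V] (G : SimpleGraph V) [DecidableRel G.Adj]
    (r : ℕ) (hr : 2 * r + 1 ≤ G.minDegree)
    (S : Finset V) (hS : IsDependent G r S) :
    IsGOA G ((G.minDegree : ℤ) - 2 * r) Sᶜ := by
  have key : ∀ v : V, degOn G S v + degOn G Sᶜ v = G.degree v := by
    intro v
    rw [degOn, degOn, ← Finset.card_union_of_disjoint, ← Finset.inter_union_distrib_left,
      Finset.union_compl, Finset.inter_univ, SimpleGraph.degree]
    exact Finset.disjoint_left.2 fun a ha hb =>
      (Finset.mem_compl.1 (Finset.mem_inter.1 hb).2) (Finset.mem_inter.1 ha).2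
  have hdeg : ∀ v ∈ S, r + 1 ≤ degOn G Sᶜ v := by
    intro v hv
    have h1 := hS v hv
    have h2 := key v
    have h3 := G.minDegree_le_degree v
    omega
  constructor
  · intro v hv
    simp only [Finset.mem_compl, not_not] at hv
    have := hdeg v hv
    rw [degOn] at this
    have hne : (G.neighborFinset v ∩ Sᶜ).Nonempty := Finset.card_pos.1 (by omega)
    obtain ⟨u, hu⟩ := hne
    simp only [Finset.mem_inter, SimpleGraph.mem_neighborFinset] at hu
    exact ⟨u, hu.2, hu.1.symm⟩
  · intro v hv
    simp only [Finset.mem_compl, not_not] at hv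
    rw [compl_compl]
    have h1 := hS v hv
    have h2 := key v
    have h3 := G.minDegree_le_degree v
    omega
end

section
/- If S is a global offensive k-alliance in a graph Γ with maximum degree Δ, where 2-Δ ≤ k ≤ Δ, then the complement V \ S is a ⌊(Δ-k)/2⌋-dependent set in Γ. -/
open Finset

variable {V V₁ V₂ : Type*}

theorem stmt_1 [Fintype V] [DecidableEq V] (G : SimpleGraph V) [DecidableRel G.Adj]
    (k : ℤ) (hk₁ : 2 - (G.maxDegree : ℤ) ≤ k) (hk₂ : k ≤ (G.maxDegree : ℤ))
    (S : Finset V) (hS : IsGOA G k S) :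
    IsDependent G (((G.maxDegree : ℤ) - k).toNat / 2) Sᶜ := by
  intro v hv
  have hvS : v ∉ S := by simpa using hv
  have h := hS.2 v hvS
  have hsum : degOn G S v + degOn G Sᶜ v = G.degree v := by
    unfold degOn
    rw [← Finset.card_union_of_disjoint (by
      exact Finset.disjoint_left.2 fun x hx hx' => by
        simp at hx hx'
        exact hx'.2 hx.2)]
    rw [← Finset.inter_union_distrib_left, Finset.union_compl, Finset.inter_univ,
      SimpleGraph.degree]
  have hdeg : G.degree v ≤ G.maxDegree := G.degree_le_maxDegree v
  omega
end

section
/- In a δ-regular graph Γ with δ > 0, a set S is an r-dependent set (with 0 ≤ r ≤ ⌊(δ-1)/2⌋) if and only if its complement V \ S is a global offensive (δ-2r)-alliance. -/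
open Finset

variable {V V₁ V₂ : Type*}

theorem stmt_2 [Fintype V] [DecidableEq V] (G : SimpleGraph V) [DecidableRel G.Adj]
    (δ : ℕ) (hδ : 0 < δ) (hreg : G.IsRegularOfDegree δ)
    (r : ℕ) (hr : 2 * r + 1 ≤ δ) (S : Finset V) :
    IsDependent G r S ↔ IsGOA G ((δ : ℤ) - 2 * r) Sᶜ := by
  have key : ∀ v : V, degOn G S v + degOn G Sᶜ v = δ := by
    intro v
    have : (G.neighborFinset v ∩ S) ∪ (G.neighborFinset v ∩ Sᶜ) = G.neighborFinset v := by
      rw [← Finset.inter_union_distrib_left, Finset.union_compl, Finset.inter_univ]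
    have hd : Disjoint (G.neighborFinset v ∩ S) (G.neighborFinset v ∩ Sᶜ) :=
      Finset.disjoint_left.2 fun a ha hb => by
        have := Finset.mem_of_mem_inter_right hb
        simp_all
    have hcard := Finset.card_union_of_disjoint hd
    rw [‹_ ∪ _ = _›] at hcard
    rw [degOn, degOn, ← hcard]
    exact hreg v
  constructor
  · intro hdep
    constructor
    · intro v hv
      simp only [Finset.mem_compl, not_not] at hv
      have h1 : degOn G S v ≤ r := hdep v hv
      have hk := key v
      have h2 : 0 < degOn G Sᶜ v := by omega
      obtain ⟨u, hu⟩ := Finset.card_pos.1 h2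
      simp only [Finset.mem_inter, SimpleGraph.mem_neighborFinset] at hu
      exact ⟨u, hu.2, hu.1.symm⟩
    · intro v hv
      simp only [Finset.mem_compl, not_not, compl_compl] at *
      have h1 : degOn G S v ≤ r := hdep v hv
      have h2 := key v
      omega
  · intro ⟨_, hgoa⟩ v hv
    have := hgoa v (by simpa using hv)
    have h2 := key v
    rw [compl_compl] at this
    omega
end

section
/- For a graph Γ of order n and maximum degree Δ, and any k with 2-Δ ≤ k ≤ Δ, the global offensive k-alliance number satisfies γ_k^o(Γ) ≥ n - α_{⌊(Δ-k)/2⌋}(Γ), where α_r(Γ) is the maximum cardinality of an r-dependent set. -/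
open Finset

variable {V V₁ V₂ : Type*}

theorem stmt_3 [Fintype V] [DecidableEq V] (G : SimpleGraph V) [DecidableRel G.Adj]
    (k : ℤ) (hk₁ : 2 - (G.maxDegree : ℤ) ≤ k) (hk₂ : k ≤ (G.maxDegree : ℤ)) :
    Fintype.card V - depNum G (((G.maxDegree : ℤ) - k).toNat / 2) ≤ goaNum G k := by
  set r := (((G.maxDegree : ℤ) - k).toNat / 2) with hr
  have hne : {t | ∃ S : Finset V, IsGOA G k S ∧ S.card = t}.Nonempty :=
    ⟨(Finset.univ : Finset V).card, Finset.univ,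
      ⟨fun v hv => absurd (Finset.mem_univ v) hv,
       fun v hv => absurd (Finset.mem_univ v) hv⟩, rfl⟩
  obtain ⟨S, hS, hcard⟩ := Nat.sInf_mem hne
  have hdep : IsDependent G r Sᶜ := by
    intro v hv
    have hv' : v ∉ S := by simpa using hv
    have h2 := hS.2 v hv'
    have hsum : degOn G S v + degOn G Sᶜ v = G.degree v := by
      unfold degOn
      rw [← Finset.sdiff_eq_inter_compl, Finset.card_inter_add_card_sdiff]
      rfl
    have hΔ : G.degree v ≤ G.maxDegree := G.degree_le_maxDegree v
    omega
  have hbdd : BddAbove {t | ∃ S : Finset V, IsDependent G r S ∧ S.card = t} := by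
    refine ⟨Fintype.card V, fun t ht => ?_⟩
    obtain ⟨T, _, hT⟩ := ht
    exact hT ▸ T.card_le_univ
  have hle : Sᶜ.card ≤ depNum G r := le_csSup hbdd ⟨Sᶜ, hdep, rfl⟩
  have hcompl : Sᶜ.card = Fintype.card V - S.card := Finset.card_compl S
  have hScard : S.card ≤ Fintype.card V := S.card_le_univ
  have : goaNum G k = S.card := hcard.symm
  omega
end

section
/- For a graph Γ of order n and minimum degree δ > 0, and any k with 1 ≤ k ≤ δ, the global offensive k-alliance number satisfies γ_k^o(Γ) ≤ n - α_{⌊(δ-k)/2⌋}(Γ). -/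
open Finset

variable {V V₁ V₂ : Type*}

lemma degOn_add_degOn_compl [Fintype V] [DecidableEq V] (G : SimpleGraph V)
    [DecidableRel G.Adj] (S : Finset V) (v : V) :
    degOn G S v + degOn G Sᶜ v = G.degree v := by
  classical
  unfold degOn
  rw [← SimpleGraph.card_neighborFinset_eq_degree, ← Finset.card_union_of_disjoint]
  · congr 1
    rw [← Finset.inter_union_distrib_left, Finset.union_compl, Finset.inter_univ]
  · exact Finset.disjoint_left.2 fun x hx hy => by
      simp only [Finset.mem_inter, Finset.mem_compl] at hx hy
      exact hy.2 hx.2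

theorem stmt_4 [Fintype V] [DecidableEq V] (G : SimpleGraph V) [DecidableRel G.Adj]
    (hδ : 0 < G.minDegree) (k : ℤ) (hk₁ : 1 ≤ k) (hk₂ : k ≤ (G.minDegree : ℤ)) :
    goaNum G k ≤ Fintype.card V - depNum G (((G.minDegree : ℤ) - k).toNat / 2) := by
  classical
  set r : ℕ := ((G.minDegree : ℤ) - k).toNat / 2 with hr
  -- the set of cardinalities of r-dependent sets
  have hne : (0 : ℕ) ∈ {t | ∃ S : Finset V, IsDependent G r S ∧ S.card = t} :=
    ⟨∅, fun v hv => absurd hv (Finset.notMem_empty v), Finset.card_empty⟩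
  have hbdd : BddAbove {t | ∃ S : Finset V, IsDependent G r S ∧ S.card = t} :=
    ⟨Fintype.card V, fun t ⟨S, _, hS⟩ => hS ▸ Finset.card_le_univ S⟩
  have hmem := Nat.sSup_mem ⟨0, hne⟩ hbdd
  obtain ⟨D, hDdep, hDcard⟩ := hmem
  -- key inequality for v ∈ D
  have key : ∀ v ∈ D, (degOn G D v : ℤ) + k ≤ (degOn G Dᶜ v : ℤ) := by
    intro v hv
    have h1 : degOn G D v ≤ r := hDdep v hv
    have htn : ((((G.minDegree : ℤ) - k).toNat : ℤ)) = (G.minDegree : ℤ) - k :=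
      Int.toNat_of_nonneg (by linarith)
    have h2n : 2 * r ≤ ((G.minDegree : ℤ) - k).toNat := by omega
    have h2 : (2 * r : ℤ) ≤ (G.minDegree : ℤ) - k := by
      rw [← htn]; exact_mod_cast h2n
    have h3 : G.minDegree ≤ G.degree v := G.minDegree_le_degree v
    have h4 : degOn G D v + degOn G Dᶜ v = G.degree v := degOn_add_degOn_compl G D v
    have h1' : (degOn G D v : ℤ) ≤ r := by exact_mod_cast h1
    have h3' : (G.minDegree : ℤ) ≤ (G.degree v : ℤ) := by exact_mod_cast h3
    have h4' : (degOn G D v : ℤ) + (degOn G Dᶜ v : ℤ) = (G.degree v : ℤ) := by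
      exact_mod_cast h4
    linarith
  -- Dᶜ is a GOA
  have hGOA : IsGOA G k Dᶜ := by
    constructor
    · intro v hv
      have hvD : v ∈ D := by simpa using hv
      have hpos : 0 < (degOn G Dᶜ v : ℤ) := by
        have := key v hvD
        have : (1 : ℤ) ≤ (degOn G Dᶜ v : ℤ) := by
          have h0 : (0 : ℤ) ≤ (degOn G D v : ℤ) := by positivity
          linarith
        linarith
      have hpos' : 0 < degOn G Dᶜ v := by exact_mod_cast hpos
      obtain ⟨u, hu⟩ := Finset.card_pos.1 hpos'
      simp only [degOn, Finset.mem_inter, SimpleGraph.mem_neighborFinset] at hu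
      exact ⟨u, hu.2, hu.1.symm⟩
    · intro v hv
      have hvD : v ∈ D := by simpa using hv
      rw [compl_compl]
      exact key v hvD
  -- conclude
  have hle : goaNum G k ≤ (Dᶜ).card :=
    Nat.sInf_le ⟨Dᶜ, hGOA, rfl⟩
  rw [Finset.card_compl] at hle
  have hD : D.card = depNum G r := hDcard
  have hcle : D.card ≤ Fintype.card V := Finset.card_le_univ D
  omega
end

section
/- Let Γ be a graph with minimum degree δ > 0 and maximum degree Δ. If 0 < τ ≤ min{(k+δ)/(2δ), (k+Δ)/(2Δ)}, then every global offensive k-alliance in Γ is a τ-dominating set. -/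
open Finset

variable {V V₁ V₂ : Type*}

theorem stmt_5 [Fintype V] [DecidableEq V] (G : SimpleGraph V) [DecidableRel G.Adj]
    (hδ : 0 < G.minDegree) (k : ℤ) (τ : ℝ) (hτ₀ : 0 < τ)
    (hτ : τ ≤ min (((k : ℝ) + G.minDegree) / (2 * G.minDegree))
                  (((k : ℝ) + G.maxDegree) / (2 * G.maxDegree)))
    (S : Finset V) (hS : IsGOA G k S) :
    IsTauDominating G τ S := by
  intro v hv
  have hsum : degOn G S v + degOn G Sᶜ v = G.degree v := by
    have : G.neighborFinset v ∩ Sᶜ = G.neighborFinset v \ S := by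
      ext x; simp [Finset.mem_sdiff, and_comm]
    rw [degOn, degOn, this, Finset.card_inter_add_card_sdiff,
      SimpleGraph.card_neighborFinset_eq_degree]
  have hkey := hS.2 v hv
  have hkeyR : ((G.degree v : ℝ)) + k ≤ 2 * (degOn G S v : ℝ) := by
    have : (G.degree v : ℤ) + k ≤ 2 * (degOn G S v : ℤ) := by
      have := hsum
      omega
    exact_mod_cast this
  have hdeg : (G.minDegree : ℝ) ≤ (G.degree v : ℝ) := by
    exact_mod_cast G.minDegree_le_degree v
  have hmax : ((G.degree v : ℝ)) ≤ (G.maxDegree : ℝ) := by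
    exact_mod_cast G.degree_le_maxDegree v
  have hδR : (0:ℝ) < (G.minDegree : ℝ) := by exact_mod_cast hδ
  have hΔR : (0:ℝ) < (G.maxDegree : ℝ) := lt_of_lt_of_le hδR (hdeg.trans hmax)
  have h1 : τ * (2 * (G.minDegree : ℝ)) ≤ (k : ℝ) + G.minDegree := by
    have := hτ.trans (min_le_left _ _)
    rw [le_div_iff₀ (by positivity)] at this
    linarith
  have h2 : τ * (2 * (G.maxDegree : ℝ)) ≤ (k : ℝ) + G.maxDegree := by
    have := hτ.trans (min_le_right _ _)
    rw [le_div_iff₀ (by positivity)] at this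
    linarith
  rcases le_or_gt τ (1/2) with h | h
  · nlinarith
  · nlinarith
end

section
/- Let Γ be a graph with minimum degree δ > 0 and maximum degree Δ. If max{(k+δ)/(2δ), (k+Δ)/(2Δ)} ≤ τ ≤ 1, then every τ-dominating set in Γ is a global offensive k-alliance. -/
open Finset

variable {V V₁ V₂ : Type*}

theorem stmt_6 [Fintype V] [DecidableEq V] (G : SimpleGraph V) [DecidableRel G.Adj]
    (hδ : 0 < G.minDegree) (k : ℤ) (τ : ℝ) (hτ₀ : 0 < τ)
    (hτ : max (((k : ℝ) + G.minDegree) / (2 * G.minDegree))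
              (((k : ℝ) + G.maxDegree) / (2 * G.maxDegree)) ≤ τ)
    (hτ₁ : τ ≤ 1) (S : Finset V) (hS : IsTauDominating G τ S) :
    IsGOA G k S := by
  have hsum : ∀ v : V, degOn G S v + degOn G Sᶜ v = G.degree v := by
    intro v
    unfold degOn
    rw [← SimpleGraph.card_neighborFinset_eq_degree,
      show G.neighborFinset v ∩ Sᶜ = G.neighborFinset v \ S from by ext; simp]
    exact Finset.card_inter_add_card_sdiff _ _
  have key : ∀ v ∉ S, ((G.degree v : ℤ) + k ≤ 2 * degOn G S v) := by
    intro v hv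
    have hτS := hS v hv
    have hd1 : (G.minDegree : ℝ) ≤ G.degree v := by
      exact_mod_cast G.minDegree_le_degree v
    have hd2 : (G.degree v : ℝ) ≤ G.maxDegree := by
      exact_mod_cast G.degree_le_maxDegree v
    have hδ' : (0:ℝ) < G.minDegree := by exact_mod_cast hδ
    have hΔ' : (0:ℝ) < G.maxDegree := lt_of_lt_of_le hδ' (hd1.trans hd2)
    have h1 : (k:ℝ) ≤ (2*τ - 1) * G.minDegree := by
      have h := (le_max_left (((k : ℝ) + G.minDegree) / (2 * G.minDegree)) _).trans hτ
      rw [div_le_iff₀ (by positivity)] at h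
      nlinarith
    have h2 : (k:ℝ) ≤ (2*τ - 1) * G.maxDegree := by
      have h := (le_max_right (((k : ℝ) + G.minDegree) / (2 * G.minDegree)) _).trans hτ
      rw [div_le_iff₀ (by positivity)] at h
      nlinarith
    have h3 : (k:ℝ) ≤ (2*τ - 1) * G.degree v := by
      rcases le_or_gt (2*τ-1) 0 with h | h
      · nlinarith
      · nlinarith
    have hfin : (G.degree v : ℝ) + k ≤ 2 * degOn G S v := by nlinarith
    exact_mod_cast hfin
  constructor
  · intro v hv
    have hτS := hS v hv
    have hdv : (0:ℝ) < G.degree v := by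
      have : 0 < G.degree v := lt_of_lt_of_le hδ (G.minDegree_le_degree v)
      exact_mod_cast this
    have hpos : (0:ℝ) < degOn G S v := lt_of_lt_of_le (by positivity) hτS
    have : 0 < degOn G S v := by exact_mod_cast hpos
    obtain ⟨u, hu⟩ := Finset.card_pos.mp this
    simp only [degOn, Finset.mem_inter, SimpleGraph.mem_neighborFinset] at hu
    exact ⟨u, hu.2, hu.1.symm⟩
  · intro v hv
    have h := key v hv
    have hs := hsum v
    omega
end

section
/- Let Γ be a graph without isolated vertices and k ≤ 1. If S is a minimal global offensive k-alliance in Γ (no proper subset of S is a global offensive k-alliance), then V \ S is a dominating set in Γ. -/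
open Finset

variable {V V₁ V₂ : Type*}

theorem stmt_10 [Fintype V] [DecidableEq V] (G : SimpleGraph V) [DecidableRel G.Adj]
    (hiso : ∀ v : V, 0 < G.degree v) (k : ℤ) (hk : k ≤ 1)
    (S : Finset V) (hS : IsGOA G k S)
    (hmin : ∀ S' : Finset V, S' ⊂ S → ¬ IsGOA G k S') :
    IsDominating G Sᶜ := by
  intro v hv
  rw [Finset.mem_compl, not_not] at hv
  by_contra hno
  push_neg at hno
  -- every neighbor of v lies in S
  have hall : ∀ w, G.Adj w v → w ∈ S := by
    intro w hw
    by_contra hwS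
    exact hno w (Finset.mem_compl.mpr hwS) hw
  set S' := S.erase v with hS'
  have hss : S' ⊂ S := Finset.erase_ssubset hv
  apply hmin S' hss
  have hnbr : G.neighborFinset v ⊆ S' := by
    intro w hw
    rw [SimpleGraph.mem_neighborFinset] at hw
    exact Finset.mem_erase.mpr ⟨hw.ne', hall w hw.symm⟩
  have hdeg1 : degOn G S' v = G.degree v := by
    unfold degOn
    rw [Finset.inter_eq_left.mpr hnbr, SimpleGraph.card_neighborFinset_eq_degree]
  have hdeg2 : degOn G S'ᶜ v = 0 := by
    unfold degOn
    rw [Finset.card_eq_zero]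
    rw [← Finset.disjoint_iff_inter_eq_empty]
    exact disjoint_compl_right.mono_left hnbr
  -- for u ∉ S, u not adjacent to v
  have hnadj : ∀ u, u ∉ S → ¬ G.Adj u v := by
    intro u hu hadj
    exact hu (hall u hadj)
  have hkey : ∀ u, u ∉ S → degOn G S' u = degOn G S u ∧ degOn G S'ᶜ u = degOn G Sᶜ u := by
    intro u hu
    have hvn : v ∉ G.neighborFinset u := by
      rw [SimpleGraph.mem_neighborFinset]
      exact hnadj u hu
    constructor
    · unfold degOn
      congr 1
      ext w
      simp only [Finset.mem_inter, hS', Finset.mem_erase]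
      constructor
      · rintro ⟨h1, _, h2⟩; exact ⟨h1, h2⟩
      · rintro ⟨h1, h2⟩
        refine ⟨h1, ?_, h2⟩
        rintro rfl; exact hvn h1
    · unfold degOn
      congr 1
      ext w
      simp only [Finset.mem_inter, hS', Finset.mem_compl, Finset.mem_erase, not_and]
      constructor
      · rintro ⟨h1, h2⟩
        refine ⟨h1, fun hwS => ?_⟩
        by_cases hwv : w = v
        · subst hwv; exact hvn h1
        · exact absurd hwS (h2 hwv)
      · rintro ⟨h1, h2⟩
        refine ⟨h1, fun _ => h2⟩
  obtain ⟨hdom, hoff⟩ := hS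
  constructor
  · -- dominating
    intro u hu
    by_cases huS : u ∈ S
    · -- u = v or u ∈ S'... u ∈ S, u ∉ S' means u = v
      have huv : u = v := by
        by_contra h
        exact hu (Finset.mem_erase.mpr ⟨h, huS⟩)
      subst huv
      have hd : 0 < G.degree u := hiso u
      rw [← SimpleGraph.card_neighborFinset_eq_degree, Finset.card_pos] at hd
      obtain ⟨w, hw⟩ := hd
      exact ⟨w, hnbr hw, ((SimpleGraph.mem_neighborFinset _ _ _).mp hw).symm⟩
    · obtain ⟨w, hwS, hwadj⟩ := hdom u huS
      have hwv : w ≠ v := by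
        rintro rfl
        exact hnadj u huS hwadj.symm
      exact ⟨w, Finset.mem_erase.mpr ⟨hwv, hwS⟩, hwadj⟩
  · intro u hu
    by_cases huS : u ∈ S
    · have huv : u = v := by
        by_contra h
        exact hu (Finset.mem_erase.mpr ⟨h, huS⟩)
      subst huv
      rw [hdeg1, hdeg2]
      have : (1 : ℤ) ≤ (G.degree u : ℤ) := by exact_mod_cast hiso u
      omega
    · obtain ⟨h1, h2⟩ := hkey u huS
      rw [h1, h2]
      exact hoff u huS
end

section
/- Let Γ be a graph of order n with minimum degree δ. Every dominating set S in Γ with |S| ≥ ⌈(2n+k-δ-2)/2⌉ is a global offensive k-alliance in Γ. -/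
open Finset

variable {V V₁ V₂ : Type*}

theorem stmt_13 [Fintype V] [DecidableEq V] (G : SimpleGraph V) [DecidableRel G.Adj]
    (k : ℤ) (S : Finset V) (hdom : IsDominating G S)
    (hcard : (⌈((2 * (Fintype.card V : ℤ) + k - (G.minDegree : ℤ) - 2 : ℤ) : ℚ) / 2⌉ : ℤ)
      ≤ (S.card : ℤ)) :
    IsGOA G k S := by
  have hcard2 : 2 * (Fintype.card V : ℤ) + k - (G.minDegree : ℤ) - 2 ≤ 2 * S.card := by
    have h1 : ((2 * (Fintype.card V : ℤ) + k - (G.minDegree : ℤ) - 2 : ℤ) : ℚ) / 2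
        ≤ ((S.card : ℤ) : ℚ) := by
      calc _ ≤ ((⌈((2 * (Fintype.card V : ℤ) + k - (G.minDegree : ℤ) - 2 : ℤ) : ℚ) / 2⌉ : ℤ) : ℚ) :=
            Int.le_ceil _
        _ ≤ _ := by exact_mod_cast hcard
    have h2 : ((2 * (Fintype.card V : ℤ) + k - (G.minDegree : ℤ) - 2 : ℤ) : ℚ)
        ≤ ((2 * (S.card : ℤ) : ℤ) : ℚ) := by
      push_cast at h1 ⊢
      linarith
    exact_mod_cast h2
  refine ⟨hdom, fun v hv => ?_⟩
  have hsplit : degOn G S v + degOn G Sᶜ v = G.degree v := by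
    rw [degOn, degOn, ← Finset.card_union_of_disjoint, ← Finset.inter_union_distrib_left,
      Finset.union_compl, Finset.inter_univ, SimpleGraph.degree]
    exact Finset.disjoint_left.mpr fun x hx hx' =>
      Finset.mem_compl.mp (Finset.mem_inter.mp hx').2 (Finset.mem_inter.mp hx).2
  have hdeg : (G.minDegree : ℤ) ≤ (G.degree v : ℤ) := by
    exact_mod_cast G.minDegree_le_degree v
  have hb : degOn G Sᶜ v < Sᶜ.card := by
    apply Finset.card_lt_card
    refine ⟨Finset.inter_subset_right, fun hsub => ?_⟩
    have := hsub (Finset.mem_compl.mpr hv)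
    exact G.irrefl ((Finset.mem_inter.mp this).1 |> (SimpleGraph.mem_neighborFinset G v v).mp)
  have hcompl : Sᶜ.card + S.card = Fintype.card V := by
    rw [Finset.card_compl]
    exact Nat.sub_add_cancel (Finset.card_le_univ S)
  have hbz : (degOn G Sᶜ v : ℤ) + 1 + S.card ≤ Fintype.card V := by
    have : (degOn G Sᶜ v : ℤ) + 1 ≤ Sᶜ.card := by exact_mod_cast hb
    have hc : (Sᶜ.card : ℤ) + S.card = Fintype.card V := by exact_mod_cast hcompl
    linarith
  have hsz : (degOn G S v : ℤ) + degOn G Sᶜ v = G.degree v := by exact_mod_cast hsplit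
  linarith
end

section
/- Let Γ_1, Γ_2 be graphs with minimum degrees δ_1, δ_2 and maximum degrees Δ_1, Δ_2. If S_1 × S_2 is an offensive k-alliance in the Cartesian product Γ_1 × Γ_2 (with S_1 ⊊ V_1, S_2 ⊊ V_2 nonempty), then S_1 is an offensive (k+δ_2)-alliance in Γ_1 and S_2 is an offensive (k+δ_1)-alliance in Γ_2. -/
open Finset

variable {V V₁ V₂ : Type*}

section degOn

variable [Fintype V] [DecidableEq V] (G : SimpleGraph V) [DecidableRel G.Adj]

lemma degOn_compl_add_degOn (S : Finset V) (v : V) :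
    degOn G Sᶜ v + degOn G S v = G.degree v := by
  rw [degOn, degOn, ← card_union_of_disjoint (disjoint_compl_left.mono inter_subset_right
    inter_subset_right), ← inter_union_distrib_left, union_comm, union_compl, inter_univ,
    SimpleGraph.card_neighborFinset_eq_degree]

lemma degOn_compl_add_le_degOn_iff (S : Finset V) (v : V) (k : ℤ) :
    (degOn G Sᶜ v : ℤ) + k ≤ degOn G S v ↔ (G.degree v : ℤ) + k ≤ 2 * degOn G S v := by
  have := degOn_compl_add_degOn G S v
  omega

end degOn

section boxProd

variable [Fintype V₁] [DecidableEq V₁] [Fintype V₂] [DecidableEq V₂]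
  (G₁ : SimpleGraph V₁) (G₂ : SimpleGraph V₂)
  [DecidableRel G₁.Adj] [DecidableRel G₂.Adj] [DecidableRel (G₁ □ G₂).Adj]

lemma degOn_boxProd_product (S₁ : Finset V₁) (S₂ : Finset V₂) (v : V₁ × V₂) :
    degOn (G₁ □ G₂) (S₁ ×ˢ S₂) v =
      (if v.2 ∈ S₂ then degOn G₁ S₁ v.1 else 0) + (if v.1 ∈ S₁ then degOn G₂ S₂ v.2 else 0) := by
  rw [degOn, SimpleGraph.neighborFinset_boxProd, disjUnion_eq_union, union_inter_distrib_right,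
    card_union_of_disjoint, product_inter_product, product_inter_product, card_product,
    card_product]
  · split_ifs <;> simp [*, degOn]
  · exact (disjoint_product.mpr <| .inl <| G₁.neighborFinset_disjoint_singleton _).mono
      inter_subset_left inter_subset_left

/- Test the alliance at `(v₁, u₂)` with `u₂ ∈ S₂`: there `v₁` keeps its neighbours in `S₁`, and
the second factor only adds `deg u₂ ≥ δ₂` neighbours outside `S₁ ×ˢ S₂`. -/
theorem IsOA.left_of_boxProd {k : ℤ} {S₁ : Finset V₁} {S₂ : Finset V₂}
    (h : IsOA (G₁ □ G₂) k (S₁ ×ˢ S₂)) : IsOA G₁ (k + G₂.minDegree) S₁ := by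
  obtain ⟨⟨⟨u₁, u₂⟩, hu⟩, hOA⟩ := h
  obtain ⟨hu₁, hu₂⟩ := mem_product.mp hu
  refine ⟨⟨u₁, hu₁⟩, fun v₁ hv₁ ⟨w₁, hw₁, hadj⟩ => ?_⟩
  have hprod := hOA (v₁, u₂) (by simp [hv₁])
    ⟨(w₁, u₂), mem_product.mpr ⟨hw₁, hu₂⟩, SimpleGraph.boxProd_adj_left.mpr hadj⟩
  rw [degOn_compl_add_le_degOn_iff, SimpleGraph.degree_boxProd, degOn_boxProd_product] at hprod
  rw [degOn_compl_add_le_degOn_iff]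
  have := G₂.minDegree_le_degree u₂
  simp only [hu₂, hv₁, if_true, if_false] at hprod
  omega

theorem IsOA.right_of_boxProd {k : ℤ} {S₁ : Finset V₁} {S₂ : Finset V₂}
    (h : IsOA (G₁ □ G₂) k (S₁ ×ˢ S₂)) : IsOA G₂ (k + G₁.minDegree) S₂ := by
  obtain ⟨⟨⟨u₁, u₂⟩, hu⟩, hOA⟩ := h
  obtain ⟨hu₁, hu₂⟩ := mem_product.mp hu
  refine ⟨⟨u₂, hu₂⟩, fun v₂ hv₂ ⟨w₂, hw₂, hadj⟩ => ?_⟩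
  have hprod := hOA (u₁, v₂) (by simp [hv₂])
    ⟨(u₁, w₂), mem_product.mpr ⟨hu₁, hw₂⟩, SimpleGraph.boxProd_adj_right.mpr hadj⟩
  rw [degOn_compl_add_le_degOn_iff, SimpleGraph.degree_boxProd, degOn_boxProd_product] at hprod
  rw [degOn_compl_add_le_degOn_iff]
  have := G₁.minDegree_le_degree u₁
  simp only [hu₁, hv₂, if_true, if_false] at hprod
  omega

end boxProd

theorem stmt_15_general [Fintype V₁] [DecidableEq V₁] [Fintype V₂] [DecidableEq V₂]
    (G₁ : SimpleGraph V₁) (G₂ : SimpleGraph V₂)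
    [DecidableRel G₁.Adj] [DecidableRel G₂.Adj] [DecidableRel (G₁ □ G₂).Adj]
    (k : ℤ) (S₁ : Finset V₁) (S₂ : Finset V₂)
    (h : IsOA (G₁ □ G₂) k (S₁ ×ˢ S₂)) :
    IsOA G₁ (k + (G₂.minDegree : ℤ)) S₁ ∧ IsOA G₂ (k + (G₁.minDegree : ℤ)) S₂ :=
  ⟨h.left_of_boxProd, h.right_of_boxProd⟩

theorem stmt_15 [Fintype V₁] [DecidableEq V₁] [Fintype V₂] [DecidableEq V₂]
    (G₁ : SimpleGraph V₁) (G₂ : SimpleGraph V₂)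
    [DecidableRel G₁.Adj] [DecidableRel G₂.Adj] [DecidableRel (G₁ □ G₂).Adj]
    (k : ℤ) (S₁ : Finset V₁) (S₂ : Finset V₂)
    (h₁ : S₁.Nonempty) (h₂ : S₂.Nonempty) (h₁' : S₁ ≠ Finset.univ)
    (h₂' : S₂ ≠ Finset.univ)
    (h : IsOA (G₁ □ G₂) k (S₁ ×ˢ S₂)) :
    IsOA G₁ (k + (G₂.minDegree : ℤ)) S₁ ∧ IsOA G₂ (k + (G₁.minDegree : ℤ)) S₂ :=
  stmt_15_general G₁ G₂ k S₁ S₂ h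
end

section
/- If S is a global offensive k-alliance in Γ_1, then S × V_2 is a global offensive (k - Δ_2)-alliance in the Cartesian product Γ_1 × Γ_2, where Δ_2 is the maximum degree of Γ_2. -/
open Finset

variable {V V₁ V₂ : Type*}

attribute [-instance] SimpleGraph.boxProdFintypeNeighborSet

section Aux

variable [Fintype V₁] [DecidableEq V₁] [Fintype V₂] [DecidableEq V₂]
    (G₁ : SimpleGraph V₁) (G₂ : SimpleGraph V₂)
    [DecidableRel G₁.Adj] [DecidableRel G₂.Adj] [DecidableRel (G₁ □ G₂).Adj]

lemma degOn_box_in (S : Finset V₁) (a : V₁) (b : V₂) (ha : a ∉ S) :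
    degOn (G₁ □ G₂) (S ×ˢ (Finset.univ : Finset V₂)) (a, b) = degOn G₁ S a := by
  unfold degOn
  have key : (G₁ □ G₂).neighborFinset (a, b) ∩ (S ×ˢ (Finset.univ : Finset V₂))
      = (G₁.neighborFinset a ∩ S).image (fun u => (u, b)) := by
    ext ⟨x, y⟩
    simp only [Finset.mem_inter, SimpleGraph.mem_neighborFinset, SimpleGraph.boxProd_adj,
      Finset.mem_product, Finset.mem_univ, and_true, Finset.mem_image, Prod.mk.injEq]
    constructor
    · rintro ⟨h1 | h2, hx⟩
      · exact ⟨x, ⟨⟨h1.1, hx⟩, rfl, h1.2⟩⟩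
      · exact absurd (h2.2 ▸ hx) ha
    · rintro ⟨u, ⟨hu, hS⟩, rfl, rfl⟩
      exact ⟨Or.inl ⟨hu, rfl⟩, hS⟩
  rw [key, Finset.card_image_of_injective _ (fun u v h => (Prod.mk.injEq _ _ _ _ ▸ h).1)]

lemma degOn_box_out (S : Finset V₁) (a : V₁) (b : V₂) (ha : a ∉ S) :
    degOn (G₁ □ G₂) (S ×ˢ (Finset.univ : Finset V₂))ᶜ (a, b)
      = degOn G₁ Sᶜ a + G₂.degree b := by
  unfold degOn
  have key : (G₁ □ G₂).neighborFinset (a, b) ∩ (S ×ˢ (Finset.univ : Finset V₂))ᶜ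
      = (G₁.neighborFinset a ∩ Sᶜ).image (fun u => (u, b))
        ∪ (G₂.neighborFinset b).image (fun w => (a, w)) := by
    ext ⟨x, y⟩
    simp only [Finset.mem_inter, SimpleGraph.mem_neighborFinset, SimpleGraph.boxProd_adj,
      Finset.mem_compl, Finset.mem_product, Finset.mem_univ, and_true, Finset.mem_union,
      Finset.mem_image, Prod.mk.injEq, not_and]
    constructor
    · rintro ⟨h1 | h2, hmem⟩
      · exact Or.inl ⟨x, ⟨⟨h1.1, hmem⟩, rfl, h1.2⟩⟩
      · exact Or.inr ⟨y, h2.1, h2.2, rfl⟩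
    · rintro (⟨u, ⟨hu, hc⟩, rfl, rfl⟩ | ⟨w, hw, rfl, rfl⟩)
      · exact ⟨Or.inl ⟨hu, rfl⟩, hc⟩
      · exact ⟨Or.inr ⟨hw, rfl⟩, ha⟩
  rw [key, Finset.card_union_of_disjoint, Finset.card_image_of_injective _
      (fun u v h => (Prod.mk.injEq _ _ _ _ ▸ h).1),
      Finset.card_image_of_injective _ (fun u v h => (Prod.mk.injEq _ _ _ _ ▸ h).2),
      SimpleGraph.card_neighborFinset_eq_degree]
  · rw [Finset.disjoint_left]
    rintro ⟨x, y⟩ hx hy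
    simp only [Finset.mem_image, Prod.mk.injEq] at hx hy
    obtain ⟨u, hu, rfl, rfl⟩ := hx
    replace hu := (Finset.mem_inter.mp hu).1
    obtain ⟨w, hw, rfl, rfl⟩ := hy
    exact G₁.irrefl (SimpleGraph.mem_neighborFinset _ _ _ |>.mp hu)

end Aux

theorem stmt_16 [Fintype V₁] [DecidableEq V₁] [Fintype V₂] [DecidableEq V₂]
    (G₁ : SimpleGraph V₁) (G₂ : SimpleGraph V₂)
    [DecidableRel G₁.Adj] [DecidableRel G₂.Adj] [DecidableRel (G₁ □ G₂).Adj]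
    (k : ℤ) (S : Finset V₁) (hS : IsGOA G₁ k S) :
    IsGOA (G₁ □ G₂) (k - (G₂.maxDegree : ℤ)) (S ×ˢ (Finset.univ : Finset V₂)) := by
  obtain ⟨hdom, hoff⟩ := hS
  constructor
  · rintro ⟨a, b⟩ hv
    have ha : a ∉ S := fun h => hv (Finset.mem_product.mpr ⟨h, Finset.mem_univ b⟩)
    obtain ⟨u, hu, huv⟩ := hdom a ha
    exact ⟨(u, b), Finset.mem_product.mpr ⟨hu, Finset.mem_univ b⟩,
      SimpleGraph.boxProd_adj_left.mpr huv⟩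
  · rintro ⟨a, b⟩ hv
    have ha : a ∉ S := fun h => hv (Finset.mem_product.mpr ⟨h, Finset.mem_univ b⟩)
    rw [degOn_box_in G₁ G₂ S a b ha, degOn_box_out G₁ G₂ S a b ha]
    have h1 := hoff a ha
    have h2 : (G₂.degree b : ℤ) ≤ (G₂.maxDegree : ℤ) :=
      Int.ofNat_le.mpr (G₂.degree_le_maxDegree b)
    push_cast
    linarith
end

section
/- For any graph Γ_1 and any graph Γ_2 of order n_2 and maximum degree Δ_2, γ_{k-Δ_2}^o(Γ_1 × Γ_2) ≤ n_2 · γ_k^o(Γ_1), where Γ_1 × Γ_2 denotes the Cartesian product. -/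
open Finset

variable {V V₁ V₂ : Type*}

private lemma degOn_prod_in [Fintype V₁] [DecidableEq V₁] [Fintype V₂] [DecidableEq V₂]
    (G₁ : SimpleGraph V₁) (G₂ : SimpleGraph V₂)
    [DecidableRel G₁.Adj] [DecidableRel G₂.Adj] [DecidableRel (G₁ □ G₂).Adj]
    (S₁ : Finset V₁) (u : V₁) (v : V₂) (hu : u ∉ S₁) :
    degOn (G₁ □ G₂) (S₁ ×ˢ univ) (u, v) = degOn G₁ S₁ u := by
  unfold degOn
  apply Finset.card_bij (fun a _ => a.1)
  · rintro ⟨a, b⟩ ha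
    simp only [mem_inter, SimpleGraph.mem_neighborFinset, SimpleGraph.boxProd_adj,
      mem_product, mem_univ, and_true] at ha ⊢
    rcases ha with ⟨h1 | h2, haS⟩
    · exact ⟨h1.1, haS⟩
    · exact absurd (h2.2 ▸ haS) hu
  · rintro ⟨a, b⟩ ha ⟨c, d⟩ hc h
    simp only [mem_inter, SimpleGraph.mem_neighborFinset, SimpleGraph.boxProd_adj,
      mem_product, mem_univ, and_true] at ha hc
    have hb : b = v := by
      rcases ha.1 with h1 | h2
      · exact h1.2.symm
      · exact absurd (h2.2 ▸ ha.2) hu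
    have hd : d = v := by
      rcases hc.1 with h1 | h2
      · exact h1.2.symm
      · exact absurd (h2.2 ▸ hc.2) hu
    simp_all
  · intro x hx
    simp only [mem_inter, SimpleGraph.mem_neighborFinset] at hx
    refine ⟨(x, v), ?_, rfl⟩
    simp [SimpleGraph.boxProd_adj, hx.1, hx.2]

private lemma degOn_prod_out [Fintype V₁] [DecidableEq V₁] [Fintype V₂] [DecidableEq V₂]
    (G₁ : SimpleGraph V₁) (G₂ : SimpleGraph V₂)
    [DecidableRel G₁.Adj] [DecidableRel G₂.Adj] [DecidableRel (G₁ □ G₂).Adj]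
    (S₁ : Finset V₁) (u : V₁) (v : V₂) (hu : u ∉ S₁) :
    degOn (G₁ □ G₂) ((S₁ ×ˢ univ)ᶜ) (u, v) = degOn G₁ S₁ᶜ u + G₂.degree v := by
  unfold degOn
  have inj1 : Function.Injective (fun x : V₁ => (x, v)) :=
    fun a b h => ((Prod.mk.injEq ..).mp h).1
  have inj2 : Function.Injective (fun x : V₂ => (u, x)) :=
    fun a b h => ((Prod.mk.injEq ..).mp h).2
  have hdisj : Disjoint ((G₁.neighborFinset u ∩ S₁ᶜ).image (·, v))
      ((G₂.neighborFinset v).image (u, ·)) := by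
    rw [Finset.disjoint_left]
    rintro ⟨a, b⟩ ha hb
    simp only [mem_image, mem_inter, SimpleGraph.mem_neighborFinset, mem_compl,
      Prod.mk.injEq] at ha hb
    obtain ⟨x, ⟨hx, hxS⟩, rfl, rfl⟩ := ha
    obtain ⟨y, hy, h1, h2⟩ := hb
    exact G₁.irrefl (h1 ▸ hx)
  rw [← SimpleGraph.card_neighborFinset_eq_degree,
    ← Finset.card_image_of_injective (G₁.neighborFinset u ∩ S₁ᶜ) inj1,
    ← Finset.card_image_of_injective (G₂.neighborFinset v) inj2,
    ← Finset.card_union_of_disjoint hdisj]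
  apply Finset.card_bij (fun a _ => a)
  · rintro ⟨a, b⟩ ha
    simp only [mem_inter, SimpleGraph.mem_neighborFinset, SimpleGraph.boxProd_adj,
      mem_compl, mem_product, mem_univ, and_true, mem_union, mem_image, mem_inter,
      Prod.mk.injEq, not_and] at ha ⊢
    rcases ha with ⟨h1 | h2, haS⟩
    · exact Or.inl ⟨a, ⟨h1.1, haS⟩, rfl, h1.2⟩
    · exact Or.inr ⟨b, h2.1, h2.2, rfl⟩
  · exact fun a _ b _ h => h
  · rintro ⟨a, b⟩ hab
    refine ⟨(a, b), ?_, rfl⟩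
    simp only [mem_union, mem_image, mem_inter, SimpleGraph.mem_neighborFinset,
      mem_compl, Prod.mk.injEq] at hab
    simp only [mem_inter, SimpleGraph.mem_neighborFinset, SimpleGraph.boxProd_adj,
      mem_compl, mem_product, mem_univ, and_true, not_and]
    rcases hab with ⟨x, ⟨hx, hxS⟩, rfl, rfl⟩ | ⟨y, hy, rfl, rfl⟩
    · exact ⟨Or.inl ⟨hx, rfl⟩, hxS⟩
    · exact ⟨Or.inr ⟨hy, rfl⟩, hu⟩

theorem stmt_17 [Fintype V₁] [DecidableEq V₁] [Fintype V₂] [DecidableEq V₂]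
    (G₁ : SimpleGraph V₁) (G₂ : SimpleGraph V₂)
    [DecidableRel G₁.Adj] [DecidableRel G₂.Adj] [DecidableRel (G₁ □ G₂).Adj]
    (k : ℤ) :
    goaNum (G₁ □ G₂) (k - (G₂.maxDegree : ℤ)) ≤ Fintype.card V₂ * goaNum G₁ k := by
  have hne : {t | ∃ S : Finset V₁, IsGOA G₁ k S ∧ S.card = t}.Nonempty := by
    refine ⟨(univ : Finset V₁).card, univ, ⟨?_, ?_⟩, rfl⟩
    · exact fun v hv => absurd (mem_univ v) hv
    · exact fun v hv => absurd (mem_univ v) hv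
  obtain ⟨S₁, hS₁, hcard⟩ := Nat.sInf_mem hne
  have hGOA : IsGOA (G₁ □ G₂) (k - (G₂.maxDegree : ℤ)) (S₁ ×ˢ univ) := by
    constructor
    · rintro ⟨u, v⟩ huv
      rw [mem_product] at huv
      simp only [mem_univ, and_true] at huv
      obtain ⟨u', hu', hadj⟩ := hS₁.1 u huv
      exact ⟨(u', v), by simp [mem_product, hu'], Or.inl ⟨hadj, rfl⟩⟩
    · rintro ⟨u, v⟩ huv
      rw [mem_product] at huv
      simp only [mem_univ, and_true] at huv
      rw [degOn_prod_in G₁ G₂ S₁ u v huv, degOn_prod_out G₁ G₂ S₁ u v huv]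
      have h1 := hS₁.2 u huv
      have h2 : (G₂.degree v : ℤ) ≤ (G₂.maxDegree : ℤ) :=
        Int.ofNat_le.mpr (G₂.degree_le_maxDegree v)
      push_cast
      linarith
  calc goaNum (G₁ □ G₂) (k - (G₂.maxDegree : ℤ)) ≤ (S₁ ×ˢ (univ : Finset V₂)).card :=
        Nat.sInf_le ⟨S₁ ×ˢ univ, hGOA, rfl⟩
    _ = Fintype.card V₂ * goaNum G₁ k := by
        rw [Finset.card_product, card_univ, hcard, Nat.mul_comm]
        rfl
end

section
/- Let Γ be a graph of order n, size m, minimum degree δ and maximum degree Δ. For every k with 2-δ ≤ k ≤ δ, the global offensive k-alliance number satisfies γ_k^o(Γ) ≥ ⌈((n+2Δ+k) - √((n+2Δ+k)² - 4(2m+kn)))/2⌉. -/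
open Finset

variable {V V₁ V₂ : Type*}

lemma degOn_eq_sum [Fintype V] [DecidableEq V] (G : SimpleGraph V) [DecidableRel G.Adj]
    (S : Finset V) (v : V) :
    degOn G S v = ∑ u ∈ S, if G.Adj v u then 1 else 0 := by
  rw [degOn, inter_comm, ← Finset.filter_mem_eq_inter, Finset.card_filter]
  exact Finset.sum_congr rfl fun u _ => by simp [SimpleGraph.mem_neighborFinset]

lemma degOn_sum_comm [Fintype V] [DecidableEq V] (G : SimpleGraph V) [DecidableRel G.Adj]
    (S : Finset V) :
    ∑ v ∈ Sᶜ, degOn G S v = ∑ u ∈ S, degOn G Sᶜ u := by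
  simp only [degOn_eq_sum]
  rw [Finset.sum_comm]
  exact Finset.sum_congr rfl fun u _ => Finset.sum_congr rfl fun v _ => by
    simp [G.adj_comm]

lemma degOn_le_card [Fintype V] [DecidableEq V] (G : SimpleGraph V) [DecidableRel G.Adj]
    (S : Finset V) (v : V) : degOn G S v ≤ S.card :=
  Finset.card_le_card Finset.inter_subset_right

lemma degOn_le_degree [Fintype V] [DecidableEq V] (G : SimpleGraph V) [DecidableRel G.Adj]
    (S : Finset V) (v : V) : degOn G S v ≤ G.degree v :=
  Finset.card_le_card Finset.inter_subset_left

theorem stmt_18 [Fintype V] [DecidableEq V] (G : SimpleGraph V) [DecidableRel G.Adj]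
    (k : ℤ) (hk₁ : 2 - (G.minDegree : ℤ) ≤ k) (hk₂ : k ≤ (G.minDegree : ℤ)) :
    (⌈((((Fintype.card V : ℤ) + 2 * (G.maxDegree : ℤ) + k : ℤ) : ℝ)
        - Real.sqrt ((((Fintype.card V : ℤ) + 2 * (G.maxDegree : ℤ) + k : ℤ) : ℝ) ^ 2
            - 4 * ((2 * (G.edgeFinset.card : ℤ) + k * (Fintype.card V : ℤ) : ℤ) : ℝ))) / 2⌉ : ℤ)
      ≤ (goaNum G k : ℤ) := by
  classical
  have huniv : IsGOA G k (univ : Finset V) :=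
    ⟨fun v hv => absurd (mem_univ v) hv, fun v hv => absurd (mem_univ v) hv⟩
  have hne : {t | ∃ S : Finset V, IsGOA G k S ∧ S.card = t}.Nonempty :=
    ⟨(univ : Finset V).card, univ, huniv, rfl⟩
  obtain ⟨S, hS, hcard⟩ : ∃ S : Finset V, IsGOA G k S ∧ S.card = goaNum G k :=
    Nat.sInf_mem hne
  set nn : ℤ := (Fintype.card V : ℤ) with hnn
  set D : ℤ := (G.maxDegree : ℤ) with hD
  set M : ℤ := (G.edgeFinset.card : ℤ) with hM
  set c : ℤ := (S.card : ℤ) with hc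
  set d : ℤ := ((Sᶜ : Finset V).card : ℤ) with hd
  have hcd : c + d = nn := by
    rw [hc, hd, hnn]; exact_mod_cast S.card_add_card_compl
  -- sum of degrees
  have h2m : ∑ v, (G.degree v : ℤ) = 2 * M := by
    rw [hM]; exact_mod_cast congrArg (Nat.cast : ℕ → ℤ)
      G.sum_degrees_eq_twice_card_edges
  have hsplit : ∑ v ∈ S, (G.degree v : ℤ) + ∑ v ∈ Sᶜ, (G.degree v : ℤ) = 2 * M := by
    rw [Finset.sum_add_sum_compl, h2m]
  have hA : ∑ v ∈ S, (G.degree v : ℤ) ≤ c * D := by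
    calc ∑ v ∈ S, (G.degree v : ℤ) ≤ ∑ _v ∈ S, D :=
          Finset.sum_le_sum fun v _ => by
            rw [hD]; exact_mod_cast G.degree_le_maxDegree v
      _ = c * D := by rw [Finset.sum_const, nsmul_eq_mul, hc]
  -- boundary sum E
  set E : ℤ := ∑ v ∈ Sᶜ, (degOn G S v : ℤ) with hE
  have hE1 : E ≤ d * c := by
    calc E ≤ ∑ _v ∈ Sᶜ, c :=
          Finset.sum_le_sum fun v _ => by
            rw [hc]; exact_mod_cast degOn_le_card G S v
      _ = d * c := by rw [Finset.sum_const, nsmul_eq_mul, hd]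
  have hE2 : E ≤ c * D := by
    have : E = ∑ u ∈ S, (degOn G Sᶜ u : ℤ) := by
      rw [hE]; exact_mod_cast congrArg (Nat.cast : ℕ → ℤ) (degOn_sum_comm G S)
    rw [this]
    calc ∑ u ∈ S, (degOn G Sᶜ u : ℤ) ≤ ∑ u ∈ S, D :=
          Finset.sum_le_sum fun u _ => by
            have h1 := degOn_le_degree G Sᶜ u
            have h2 := G.degree_le_maxDegree u
            rw [hD]; exact_mod_cast h1.trans h2
      _ = c * D := by rw [Finset.sum_const, nsmul_eq_mul, hc]
  -- GOA condition on the complement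
  have hGOA : ∑ v ∈ Sᶜ, (G.degree v : ℤ) + k * d ≤ 2 * E := by
    have : ∑ v ∈ Sᶜ, ((G.degree v : ℤ) + k) ≤ ∑ v ∈ Sᶜ, 2 * (degOn G S v : ℤ) := by
      refine Finset.sum_le_sum fun v hv => ?_
      have hvS : v ∉ S := Finset.mem_compl.mp hv
      have h1 := hS.2 v hvS
      have h2 : (degOn G S v : ℤ) + (degOn G Sᶜ v : ℤ) = (G.degree v : ℤ) := by
        exact_mod_cast degOn_add_degOn_compl G S v
      linarith
    rw [Finset.sum_add_distrib, Finset.sum_const] at this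
    have h2 : ∑ v ∈ Sᶜ, 2 * (degOn G S v : ℤ) = 2 * E := by
      rw [hE, Finset.mul_sum]
    have h3 : ((Sᶜ : Finset V).card) • k = d * k := by
      rw [nsmul_eq_mul, hd]
    rw [h2, h3] at this
    linarith
  -- the quadratic inequality
  have hkey : c ^ 2 - (nn + 2 * D + k) * c + (2 * M + k * nn) ≤ 0 := by
    nlinarith [hsplit, hA, hE1, hE2, hGOA, hcd]
  -- pass to the reals
  set A : ℝ := ((nn + 2 * D + k : ℤ) : ℝ) with hAr
  set B : ℝ := ((2 * M + k * nn : ℤ) : ℝ) with hBr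
  have hq : (c : ℝ) ^ 2 - A * (c : ℝ) + B ≤ 0 := by
    rw [hAr, hBr]
    exact_mod_cast hkey
  have hdisc : (A - 2 * (c : ℝ)) ^ 2 ≤ A ^ 2 - 4 * B := by nlinarith
  have hsqrt : A - 2 * (c : ℝ) ≤ Real.sqrt (A ^ 2 - 4 * B) := by
    calc A - 2 * (c : ℝ) ≤ |A - 2 * (c : ℝ)| := le_abs_self _
      _ = Real.sqrt ((A - 2 * (c : ℝ)) ^ 2) := (Real.sqrt_sq_eq_abs _).symm
      _ ≤ Real.sqrt (A ^ 2 - 4 * B) := Real.sqrt_le_sqrt hdisc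
  have hceil : (⌈(A - Real.sqrt (A ^ 2 - 4 * B)) / 2⌉ : ℤ) ≤ c := by
    rw [Int.ceil_le]
    push_cast
    linarith
  have hfinal : c = (goaNum G k : ℤ) := by rw [hc, hcard]
  rw [← hfinal]
  exact hceil
end
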